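/- arXiv:2410.03785 — 12 statements merged into one kernel-verified Lean document; each statement's English description precedes it below -/
import Mathlib

section
/- For every function f : ℕ → ℕ, the following are equivalent: (1) f is congruence preserving for ⟨ℕ,+⟩; (2) (a) for all x, y ∈ ℕ, the integer (y − x) divides (f(y) − f(x)), and (b♭) either f is constant or f(x) ≥ x for all x ∈ ℕ. -/
/-- A congruence on ⟨ℕ,+⟩: an equivalence relation compatible with addition. -/
def IsCongruenceN (r : ℕ → ℕ → Prop) : Prop :=
  Equivalence r ∧ ∀ x y z : ℕ, r x y → r (x + z) (y + z)

/-- `f` preserves every congruence of ⟨ℕ,+⟩. -/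
def CongruencePreservingN (f : ℕ → ℕ) : Prop :=
  ∀ r : ℕ → ℕ → Prop, IsCongruenceN r → ∀ x y : ℕ, r x y → r (f x) (f y)

private lemma cong_div (f : ℕ → ℕ) (h : CongruencePreservingN f) :
    ∀ x y : ℕ, ((y : ℤ) - (x : ℤ)) ∣ ((f y : ℤ) - (f x : ℤ)) := by
  intro x y
  set d : ℤ := (y : ℤ) - (x : ℤ) with hd
  have hcong : IsCongruenceN (fun a b => d ∣ (a : ℤ) - (b : ℤ)) := by
    constructor
    · constructor
      · intro a; simp
      · intro a b hab; have := dvd_neg.mpr hab; simpa using this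
      · intro a b c hab hbc
        have := dvd_add hab hbc; simpa using this
    · intro a b z hab
      have : ((a + z : ℕ) : ℤ) - ((b + z : ℕ) : ℤ) = (a : ℤ) - (b : ℤ) := by
        push_cast; ring
      rw [this]; exact hab
  have hxy : d ∣ (y : ℤ) - (x : ℤ) := dvd_refl _
  have := h _ hcong y x hxy
  exact this

private lemma step_iter (r : ℕ → ℕ → Prop) (hr : IsCongruenceN r) (x d : ℕ)
    (hstep : ∀ a, x ≤ a → r a (a + d)) :
    ∀ k a, x ≤ a → r a (a + k * d) := by
  intro k
  induction k with
  | zero => intro a ha; simpa using hr.1.refl a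
  | succ n ih =>
    intro a ha
    have h1 := ih a ha
    have h2 := hstep (a + n * d) (le_trans ha (Nat.le_add_right _ _))
    have := hr.1.trans h1 h2
    have heq : a + n * d + d = a + (n + 1) * d := by ring
    rwa [heq] at this

theorem stmt_1 (f : ℕ → ℕ) :
    CongruencePreservingN f ↔
      ((∀ x y : ℕ, ((y : ℤ) - (x : ℤ)) ∣ ((f y : ℤ) - (f x : ℤ))) ∧
       ((∃ c : ℕ, ∀ x, f x = c) ∨ (∀ x : ℕ, x ≤ f x))) := by
  constructor
  · intro h
    refine ⟨cong_div f h, ?_⟩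
    by_cases hmon : ∀ x : ℕ, x ≤ f x
    · exact Or.inr hmon
    · left
      push_neg at hmon
      obtain ⟨x0, hx0⟩ := hmon
      set n := f x0 + 1 with hn
      -- congruence: equal, or both ≥ n
      have hcong : IsCongruenceN (fun a b => a = b ∨ (n ≤ a ∧ n ≤ b)) := by
        constructor
        · constructor
          · intro a; exact Or.inl rfl
          · rintro a b (rfl | ⟨h1, h2⟩); · exact Or.inl rfl
            · exact Or.inr ⟨h2, h1⟩
          · rintro a b c (rfl | ⟨h1, h2⟩) hbc
            · exact hbc
            · rcases hbc with rfl | ⟨h3, h4⟩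
              · exact Or.inr ⟨h1, h2⟩
              · exact Or.inr ⟨h1, h4⟩
        · rintro a b z (rfl | ⟨h1, h2⟩)
          · exact Or.inl rfl
          · exact Or.inr ⟨le_trans h1 (Nat.le_add_right _ _),
              le_trans h2 (Nat.le_add_right _ _)⟩
      -- f y = f x0 for all y ≥ n
      have hconst_tail : ∀ y, n ≤ y → f y = f x0 := by
        intro y hy
        have hx0n : n ≤ x0 := hx0
        have hr := h _ hcong x0 y (Or.inr ⟨hx0n, hy⟩)
        rcases hr with heq | ⟨h1, _⟩
        · exact heq.symm
        · omega
      refine ⟨f x0, fun z => ?_⟩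
      -- use divisibility with a large y
      set y := n + z + f x0 + f z + 1 with hy
      have hyn : n ≤ y := by omega
      have hfy : f y = f x0 := hconst_tail y hyn
      have hdvd := cong_div f h z y
      rw [hfy] at hdvd
      by_contra hne
      have h0 : ((f x0 : ℤ) - (f z : ℤ)) ≠ 0 := by
        intro h0; apply hne; omega
      have hpos : (0:ℤ) < (f x0 : ℤ) - (f z : ℤ) ∨ (0:ℤ) < (f z : ℤ) - (f x0 : ℤ) := by
        omega
      have := Int.eq_zero_of_dvd_of_natAbs_lt_natAbs hdvd ?_
      · exact h0 this
      · have h1 : ((y:ℤ) - (z:ℤ)).natAbs = y - z := by omega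
        have h2 : ((f x0 : ℤ) - (f z : ℤ)).natAbs ≤ f x0 + f z := by omega
        omega
  · rintro ⟨hdvd, hb⟩
    rcases hb with ⟨c, hc⟩ | hmon
    · intro r hr x y _
      rw [hc x, hc y]; exact hr.1.refl c
    · intro r hr x y hxy
      rcases lt_trichotomy x y with hlt | rfl | hlt
      · -- x < y
        set d := y - x with hd
        have hdpos : 0 < d := by omega
        have hstep : ∀ a, x ≤ a → r a (a + d) := by
          intro a ha
          have := hr.2 x y (a - x) hxy
          have e1 : x + (a - x) = a := by omega
          have e2 : y + (a - x) = a + d := by omega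
          rwa [e1, e2] at this
        have key : ∀ m nn : ℕ, x ≤ m → m ≤ nn → (d:ℤ) ∣ ((nn:ℤ) - (m:ℤ)) → r m nn := by
          intro m nn hm hmn hdv
          have : (d:ℤ) ∣ ((nn - m : ℕ) : ℤ) := by
            have : ((nn - m : ℕ) : ℤ) = (nn:ℤ) - (m:ℤ) := by omega
            rw [this]; exact hdv
          have hdn : d ∣ (nn - m) := by exact_mod_cast this
          obtain ⟨k, hk⟩ := hdn
          have := step_iter r hr x d hstep k m hm
          have e : m + k * d = nn := by
            rw [Nat.mul_comm]; omega
          rwa [e] at this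
        have hdvdfxy : (d:ℤ) ∣ ((f y : ℤ) - (f x : ℤ)) := by
          have h1 := hdvd x y
          have e : ((y:ℤ) - (x:ℤ)) = (d:ℤ) := by omega
          rwa [e] at h1
        rcases le_total (f x) (f y) with hle | hle
        · exact key (f x) (f y) (le_trans (hmon x) le_rfl) hle hdvdfxy
        · have := key (f y) (f x) (le_trans (by omega : x ≤ y) (hmon y)) hle
            (by have := dvd_neg.mpr hdvdfxy; simpa using this)
          exact hr.1.symm this
      · exact hr.1.refl (f x)
      · -- y < x : symmetric
        have hxy' := hr.1.symm hxy
        set d := x - y with hd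
        have hdpos : 0 < d := by omega
        have hstep : ∀ a, y ≤ a → r a (a + d) := by
          intro a ha
          have := hr.2 y x (a - y) hxy'
          have e1 : y + (a - y) = a := by omega
          have e2 : x + (a - y) = a + d := by omega
          rwa [e1, e2] at this
        have key : ∀ m nn : ℕ, y ≤ m → m ≤ nn → (d:ℤ) ∣ ((nn:ℤ) - (m:ℤ)) → r m nn := by
          intro m nn hm hmn hdv
          have : (d:ℤ) ∣ ((nn - m : ℕ) : ℤ) := by
            have : ((nn - m : ℕ) : ℤ) = (nn:ℤ) - (m:ℤ) := by omega
            rw [this]; exact hdv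
          have hdn : d ∣ (nn - m) := by exact_mod_cast this
          obtain ⟨k, hk⟩ := hdn
          have := step_iter r hr y d hstep k m hm
          have e : m + k * d = nn := by
            rw [Nat.mul_comm]; omega
          rwa [e] at this
        have hdvdfxy : (d:ℤ) ∣ ((f x : ℤ) - (f y : ℤ)) := by
          have h1 := hdvd y x
          have e : ((x:ℤ) - (y:ℤ)) = (d:ℤ) := by omega
          rwa [e] at h1
        rcases le_total (f x) (f y) with hle | hle
        · have := key (f x) (f y) (le_trans (by omega : y ≤ x) (hmon x)) hle
            (by have := dvd_neg.mpr hdvdfxy; simpa using this)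
          exact this
        · have := key (f y) (f x) (hmon y) hle hdvdfxy
          exact hr.1.symm this
end

section
/- Let A be a set, Γ a set of functions A → A containing the identity and closed under composition, and f : A → A. Then f preserves every Γ-stable preorder on A (i.e., for every Γ-stable preorder ≼ and all x, y, x ≼ y implies f(x) ≼ f(y)) if and only if for every subset L ⊆ A, the set f⁻¹(L) belongs to every family 𝓛 of subsets of A such that L ∈ 𝓛, 𝓛 is closed under arbitrary (possibly empty or infinite) unions and arbitrary intersections (in particular ∅ ∈ 𝓛 and A ∈ 𝓛), and γ⁻¹(X) ∈ 𝓛 whenever X ∈ 𝓛 and γ ∈ Γ. -/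
theorem stmt_4 {A : Type*} (Γ : Set (A → A)) (hid : id ∈ Γ)
    (hcomp : ∀ γ δ : A → A, γ ∈ Γ → δ ∈ Γ → γ ∘ δ ∈ Γ) (f : A → A) :
    -- f preserves every Γ-stable preorder
    (∀ r : A → A → Prop, (∀ x, r x x) → (∀ x y z, r x y → r y z → r x z) →
      (∀ γ ∈ Γ, ∀ x y, r x y → r (γ x) (γ y)) →
      ∀ x y, r x y → r (f x) (f y)) ↔
    -- iff f⁻¹(L) is in every set-complete lattice containing L closed under the γ⁻¹'s
    (∀ L : Set A, ∀ 𝓛 : Set (Set A), L ∈ 𝓛 →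
      (∀ S : Set (Set A), S ⊆ 𝓛 → ⋃₀ S ∈ 𝓛) →
      (∀ S : Set (Set A), S ⊆ 𝓛 → ⋂₀ S ∈ 𝓛) →
      (∀ γ ∈ Γ, ∀ X ∈ 𝓛, γ ⁻¹' X ∈ 𝓛) →
      f ⁻¹' L ∈ 𝓛) := by
  constructor
  · intro hpres L 𝓛 hL hUnion hInter hPre
    -- the preorder generated by 𝓛
    set r : A → A → Prop := fun x y => ∀ X ∈ 𝓛, x ∈ X → y ∈ X with hr
    have hrefl : ∀ x, r x x := fun x X _ hx => hx
    have htrans : ∀ x y z, r x y → r y z → r x z :=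
      fun x y z hxy hyz X hX hx => hyz X hX (hxy X hX hx)
    have hstab : ∀ γ ∈ Γ, ∀ x y, r x y → r (γ x) (γ y) := by
      intro γ hγ x y hxy X hX hx
      exact hxy (γ ⁻¹' X) (hPre γ hγ X hX) hx
    have hf := hpres r hrefl htrans hstab
    -- closure of a point
    set C : A → Set A := fun x => ⋂₀ {X | X ∈ 𝓛 ∧ x ∈ X} with hC
    have hCmem : ∀ x, C x ∈ 𝓛 := fun x => hInter _ (fun X hX => hX.1)
    have hCr : ∀ x y, y ∈ C x ↔ r x y := by
      intro x y
      constructor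
      · intro hy X hX hx
        exact hy X ⟨hX, hx⟩
      · intro h X hX
        exact h X hX.1 hX.2
    have key : f ⁻¹' L = ⋃₀ {X | ∃ x, f x ∈ L ∧ X = C x} := by
      ext y
      constructor
      · intro hy
        exact ⟨C y, ⟨y, hy, rfl⟩, (hCr y y).2 (hrefl y)⟩
      · rintro ⟨X, ⟨x, hx, rfl⟩, hyX⟩
        have : r x y := (hCr x y).1 hyX
        exact hf x y this L hL hx
    rw [key]
    exact hUnion _ (by rintro X ⟨x, _, rfl⟩; exact hCmem x)
  · intro h r hrefl htrans hstab x y hxy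
    set 𝓛 : Set (Set A) := {X | ∀ a b, r a b → a ∈ X → b ∈ X} with h𝓛
    have := h {z | r (f x) z} 𝓛
      (fun a b hab ha => htrans _ _ _ ha hab)
      (fun S hS a b hab ⟨X, hX, haX⟩ => ⟨X, hX, hS hX a b hab haX⟩)
      (fun S hS a b hab ha X hX => hS hX a b hab (ha X hX))
      (fun γ hγ X hX a b hab ha => hX (γ a) (γ b) (hstab γ hγ a b hab) ha)
    exact this x y hxy (htrans _ _ _ (hrefl (f x)) (hrefl (f x)))
end

section
/- Let A be a set, Γ a set of functions A → A containing the identity and closed under composition, and f : A → A. Then f preserves every Γ-congruence on A (i.e., for every Γ-congruence ∼ and all x, y, x ∼ y implies f(x) ∼ f(y)) if and only if for every subset L ⊆ A, the set f⁻¹(L) belongs to every family ℬ of subsets of A such that L ∈ ℬ, ℬ is closed under complementation in A and under arbitrary (possibly empty or infinite) unions and intersections (in particular ∅ ∈ ℬ and A ∈ ℬ), and γ⁻¹(X) ∈ ℬ whenever X ∈ ℬ and γ ∈ Γ. -/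
theorem stmt_5 {A : Type*} (Γ : Set (A → A)) (hid : id ∈ Γ)
    (hcomp : ∀ γ δ : A → A, γ ∈ Γ → δ ∈ Γ → γ ∘ δ ∈ Γ) (f : A → A) :
    -- f preserves every Γ-congruence
    (∀ r : A → A → Prop, Equivalence r →
      (∀ γ ∈ Γ, ∀ x y, r x y → r (γ x) (γ y)) →
      ∀ x y, r x y → r (f x) (f y)) ↔
    -- iff f⁻¹(L) is in every set-complete Boolean algebra containing L closed
    -- under the γ⁻¹'s
    (∀ L : Set A, ∀ ℬ : Set (Set A), L ∈ ℬ →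
      (∀ X ∈ ℬ, Xᶜ ∈ ℬ) →
      (∀ S : Set (Set A), S ⊆ ℬ → ⋃₀ S ∈ ℬ) →
      (∀ S : Set (Set A), S ⊆ ℬ → ⋂₀ S ∈ ℬ) →
      (∀ γ ∈ Γ, ∀ X ∈ ℬ, γ ⁻¹' X ∈ ℬ) →
      f ⁻¹' L ∈ ℬ) := by
  constructor
  · intro hpres L ℬ hL hcompl hU hI hpre
    set r : A → A → Prop := fun a b => ∀ X ∈ ℬ, (a ∈ X ↔ b ∈ X) with hr
    have hequiv : Equivalence r :=
      ⟨fun a X hX => Iff.rfl,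
       fun {a b} h X hX => (h X hX).symm,
       fun {a b c} h1 h2 X hX => (h1 X hX).trans (h2 X hX)⟩
    have hcong : ∀ γ ∈ Γ, ∀ x y, r x y → r (γ x) (γ y) :=
      fun γ hγ x y hxy X hX => hxy _ (hpre γ hγ X hX)
    have key : ∀ x y, r x y → r (f x) (f y) := hpres r hequiv hcong
    -- block of x
    have hblock : ∀ x : A, {y | r x y} ∈ ℬ := by
      intro x
      have : {y | r x y} = ⋂₀ {X | X ∈ ℬ ∧ x ∈ X} := by
        ext y
        simp only [Set.mem_setOf_eq, Set.mem_sInter]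
        constructor
        · rintro h X ⟨hX, hxX⟩
          exact (h X hX).mp hxX
        · intro h X hX
          constructor
          · intro hx
            exact h X ⟨hX, hx⟩
          · intro hy
            by_contra hx
            exact (h Xᶜ ⟨hcompl X hX, hx⟩) hy
      rw [this]
      exact hI _ (fun X hX => hX.1)
    have : f ⁻¹' L = ⋃₀ {Z | ∃ x, f x ∈ L ∧ Z = {y | r x y}} := by
      ext y
      simp only [Set.mem_preimage, Set.mem_sUnion, Set.mem_setOf_eq]
      constructor
      · intro hy
        exact ⟨{z | r y z}, ⟨y, hy, rfl⟩, hequiv.refl y⟩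
      · rintro ⟨Z, ⟨x, hx, rfl⟩, hyZ⟩
        exact (key x y hyZ L hL).mp hx
    rw [this]
    exact hU _ (by rintro Z ⟨x, _, rfl⟩; exact hblock x)
  · intro h r hequiv hcong x y hxy
    set ℬ : Set (Set A) := {X | ∀ a b, r a b → (a ∈ X ↔ b ∈ X)} with hℬ
    have hL : {z | r z (f x)} ∈ ℬ := by
      intro a b hab
      exact ⟨fun h => hequiv.trans (hequiv.symm hab) h,
             fun h => hequiv.trans hab h⟩
    have hcompl : ∀ X ∈ ℬ, Xᶜ ∈ ℬ := fun X hX a b hab => not_congr (hX a b hab)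
    have hU : ∀ S : Set (Set A), S ⊆ ℬ → ⋃₀ S ∈ ℬ := by
      intro S hS a b hab
      simp only [Set.mem_sUnion]
      exact ⟨fun ⟨X, hX, ha⟩ => ⟨X, hX, (hS hX a b hab).mp ha⟩,
             fun ⟨X, hX, hb⟩ => ⟨X, hX, (hS hX a b hab).mpr hb⟩⟩
    have hI : ∀ S : Set (Set A), S ⊆ ℬ → ⋂₀ S ∈ ℬ := by
      intro S hS a b hab
      simp only [Set.mem_sInter]
      exact ⟨fun h X hX => (hS hX a b hab).mp (h X hX),
             fun h X hX => (hS hX a b hab).mpr (h X hX)⟩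
    have hpre : ∀ γ ∈ Γ, ∀ X ∈ ℬ, γ ⁻¹' X ∈ ℬ :=
      fun γ hγ X hX a b hab => hX _ _ (hcong γ hγ a b hab)
    have hmem := h {z | r z (f x)} ℬ hL hcompl hU hI hpre
    have hx' : x ∈ f ⁻¹' {z | r z (f x)} := hequiv.refl (f x)
    have := (hmem x y hxy).mp hx'
    exact hequiv.symm this
end

section
/- Every congruence ∼ on ⟨ℕ,+⟩ (equivalence relation on ℕ such that x ∼ y implies (x+z) ∼ (y+z) for all z) is either the identity relation, or there exist a ∈ ℕ and k ≥ 1 such that for all x, y ∈ ℕ: x ∼ y if and only if (x = y, or a ≤ x and a ≤ y and x ≡ y (mod k)). -/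
theorem stmt_8 (r : ℕ → ℕ → Prop) (hequiv : Equivalence r)
    (hstab : ∀ x y z : ℕ, r x y → r (x + z) (y + z)) :
    (∀ x y : ℕ, r x y ↔ x = y) ∨
    (∃ a k : ℕ, 1 ≤ k ∧
      ∀ x y : ℕ, r x y ↔ (x = y ∨ (a ≤ x ∧ a ≤ y ∧ x ≡ y [MOD k]))) := by
  by_cases htriv : ∀ x y : ℕ, r x y → x = y
  · left
    exact fun x y => ⟨htriv x y, fun e => e ▸ hequiv.refl x⟩
  · right
    classical
    push_neg at htriv
    obtain ⟨x0, y0, hr0, hne0⟩ := htriv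
    have hP : ∃ x, ∃ y, x < y ∧ r x y := by
      rcases lt_or_gt_of_ne hne0 with h | h
      · exact ⟨x0, y0, h, hr0⟩
      · exact ⟨y0, x0, h, hequiv.symm hr0⟩
    set a := Nat.find hP with ha_def
    obtain ⟨ya, hya, hrya⟩ := Nat.find_spec hP
    have hale : ∀ x y : ℕ, x < y → r x y → a ≤ x := by
      intro x y hxy hr
      exact Nat.find_le ⟨y, hxy, hr⟩
    have hQ : ∃ d, r a (a + (d + 1)) := by
      refine ⟨ya - a - 1, ?_⟩
      have : a + (ya - a - 1 + 1) = ya := by omega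
      rw [this]; exact hrya
    set k := Nat.find hQ + 1 with hk_def
    have hk1 : 1 ≤ k := by omega
    have hrk : r a (a + k) := Nat.find_spec hQ
    have hkmin : ∀ s, 1 ≤ s → s < k → ¬ r a (a + s) := by
      intro s hs1 hsk hr
      have := Nat.find_min hQ (m := s - 1) (by omega)
      have hss : s - 1 + 1 = s := by omega
      rw [hss] at this
      exact this hr
    -- step lemma
    have step : ∀ x, a ≤ x → r x (x + k) := by
      intro x hx
      have := hstab a (a + k) (x - a) hrk
      have e1 : a + (x - a) = x := by omega
      have e2 : a + k + (x - a) = x + k := by omega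
      rwa [e1, e2] at this
    have iter : ∀ x, a ≤ x → ∀ m, r x (x + m * k) := by
      intro x hx m
      induction m with
      | zero => simpa using hequiv.refl x
      | succ n ih =>
        have h2 : r (x + n * k) (x + n * k + k) := step _ (by omega)
        have : x + n * k + k = x + (n + 1) * k := by ring
        rw [this] at h2
        exact hequiv.trans ih h2
    -- key divisibility lemma at a
    have lemA : ∀ d, r a (a + d) → k ∣ d := by
      intro d hr
      have hdk : d % k < k := Nat.mod_lt _ (by omega)
      set s := d % k with hs_def
      set q := d / k with hq_def
      have hdqs : d = q * k + s := (Nat.div_add_mod' d k).symm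
      by_cases hs0 : s = 0
      · exact Nat.dvd_of_mod_eq_zero hs0
      · exfalso
        have h1 : r a (a + q * k) := iter a le_rfl q
        have h2 : r (a + s) (a + q * k + s) := hstab a (a + q * k) s h1
        have h3 : r a (a + q * k + s) := by
          have : a + d = a + q * k + s := by omega
          rwa [this] at hr
        have h4 : r a (a + s) := hequiv.trans h3 (hequiv.symm h2)
        exact hkmin s (by omega) (by omega) h4
    -- general divisibility lemma
    have lemB : ∀ x d, a ≤ x → r x (x + d) → k ∣ d := by
      intro x d hx hr
      have h1 : r a (a + x * k) := iter a le_rfl x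
      have hxk : x ≤ a + x * k := by nlinarith
      have h2 : r (a + x * k) (a + x * k + d) := by
        have h := hstab x (x + d) (a + x * k - x) hr
        have e1 : x + (a + x * k - x) = a + x * k := by omega
        have e2 : x + d + (a + x * k - x) = a + x * k + d := by omega
        rwa [e1, e2] at h
      have h3 : r a (a + (x * k + d)) := by
        have := hequiv.trans h1 h2
        rwa [show a + x * k + d = a + (x * k + d) from by omega] at this
      have := lemA _ h3
      exact (Nat.dvd_add_right ⟨x, by ring⟩).mp this
    refine ⟨a, k, hk1, fun x y => ⟨?_, ?_⟩⟩
    · intro hr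
      by_cases hxy : x = y
      · exact Or.inl hxy
      · right
        rcases lt_or_gt_of_ne hxy with h | h
        · have hax : a ≤ x := hale x y h hr
          have hdvd : k ∣ y - x := by
            apply lemB x (y - x) hax
            rwa [show x + (y - x) = y from by omega]
          exact ⟨hax, by omega, (Nat.modEq_iff_dvd' (by omega)).mpr hdvd⟩
        · have hr' := hequiv.symm hr
          have hay : a ≤ y := hale y x h hr'
          have hdvd : k ∣ x - y := by
            apply lemB y (x - y) hay
            rwa [show y + (x - y) = x from by omega]
          exact ⟨by omega, hay, ((Nat.modEq_iff_dvd' (by omega)).mpr hdvd).symm⟩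
    · rintro (rfl | ⟨hax, hay, hmod⟩)
      · exact hequiv.refl x
      · rcases le_total x y with h | h
        · obtain ⟨c, hc⟩ := (Nat.modEq_iff_dvd' h).mp hmod
          have := iter x hax c
          rwa [show x + c * k = y from by rw [Nat.mul_comm c k]; omega] at this
        · obtain ⟨c, hc⟩ := (Nat.modEq_iff_dvd' h).mp hmod.symm
          have := iter y hay c
          apply hequiv.symm
          rwa [show y + c * k = x from by rw [Nat.mul_comm c k]; omega] at this
end

section
/- For a subset L ⊆ ℕ the following are equivalent: (1) L is recognizable, i.e., L = φ⁻¹(Z) for some additive monoid homomorphism φ : ℕ → M into a finite additive monoid M and some Z ⊆ M; (2) L is the union of a finite subset of ℕ and finitely many (possibly zero) arithmetic progressions, i.e., there exist a finite set F ⊆ ℕ, an n ∈ ℕ, and a_1,…,a_n ∈ ℕ, k_1,…,k_n ≥ 1 such that L = F ∪ ⋃_{i=1}^{n} {a_i + k_i·m | m ∈ ℕ}. -/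
/-- A subset `L ⊆ ℕ` is recognizable if it is the inverse image of some subset of a
finite additive monoid under an additive monoid homomorphism. -/
def Recognizable (L : Set ℕ) : Prop :=
  ∃ (M : Type) (_ : AddMonoid M) (_ : Finite M) (φ : ℕ →+ M) (Z : Set M),
    L = φ ⁻¹' Z

/-!
Both conditions say that `L` is eventually periodic. For `φ : ℕ →+ M` with `M` finite,
pigeonhole gives `φ i = φ j` with `i < j`, which forces `φ (n + (j - i)) = φ n` for `n ≥ i`.
Conversely, if `L` is periodic with period `p` beyond `N`, it is saturated for the congruence
identifying `x, y ≥ N` with `x ≡ y [MOD p]`, whose quotient has at most `N + p` elements.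
Finite sets and arithmetic progressions are eventually periodic and eventual periodicity is
preserved by finite unions; conversely an eventually periodic set is its finite part below `N`
together with the progressions `N + r + p ℕ` for the residues `r < p` with `N + r ∈ L`.
-/

open Set

def arithProg (a k : ℕ) : Set ℕ := {x | ∃ m, x = a + k * m}

theorem mem_arithProg_iff {a k x : ℕ} : x ∈ arithProg a k ↔ a ≤ x ∧ k ∣ x - a := by
  constructor
  · rintro ⟨m, rfl⟩
    simp
  · rintro ⟨hax, m, hm⟩
    exact ⟨m, by omega⟩

def IsPeriodicFrom (L : Set ℕ) (N p : ℕ) : Prop := ∀ n, N ≤ n → (n ∈ L ↔ n + p ∈ L)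

def EventuallyPeriodic (L : Set ℕ) : Prop := ∃ N p, 0 < p ∧ IsPeriodicFrom L N p

namespace IsPeriodicFrom

variable {L : Set ℕ} {N p : ℕ}

theorem add_mul_mem_iff (h : IsPeriodicFrom L N p) {n : ℕ} (hn : N ≤ n) (m : ℕ) :
    n + p * m ∈ L ↔ n ∈ L := by
  induction m with
  | zero => simp
  | succ m ih =>
    rw [← ih, h (n + p * m) (by omega), Nat.mul_succ, Nat.add_assoc]

theorem mem_iff_of_modEq (h : IsPeriodicFrom L N p) {x y : ℕ} (hx : N ≤ x) (hy : N ≤ y)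
    (hxy : x ≡ y [MOD p]) : x ∈ L ↔ y ∈ L := by
  wlog hle : x ≤ y generalizing x y
  · exact (this hy hx hxy.symm (by omega)).symm
  obtain ⟨m, hm⟩ := (Nat.modEq_iff_dvd' hle).mp hxy
  rw [show y = x + p * m by omega, h.add_mul_mem_iff hx]

theorem union {L' : Set ℕ} {N' p' : ℕ} (h : IsPeriodicFrom L N p)
    (h' : IsPeriodicFrom L' N' p') : IsPeriodicFrom (L ∪ L') (max N N') (p * p') := by
  intro n hn
  have hN : N ≤ n := le_of_max_le_left hn
  have hN' : N' ≤ n := le_of_max_le_right hn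
  rw [mem_union, mem_union, h.add_mul_mem_iff hN, mul_comm, h'.add_mul_mem_iff hN']

end IsPeriodicFrom

theorem isPeriodicFrom_arithProg (a k : ℕ) : IsPeriodicFrom (arithProg a k) a k := by
  intro n hn
  rw [mem_arithProg_iff, mem_arithProg_iff, show n + k - a = n - a + k by omega,
    Nat.dvd_add_self_right]
  omega

theorem isPeriodicFrom_of_subset_Iio {F : Set ℕ} {B : ℕ} (hF : F ⊆ Iio B) :
    IsPeriodicFrom F B 1 := by
  intro n hn
  have hn' : n ∉ F := fun h => (hF h).not_ge hn
  have hn1 : n + 1 ∉ F := fun h => (hF h).not_ge (hn.trans n.le_succ)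
  simp [hn', hn1]

theorem eventuallyPeriodic_arithProg {a k : ℕ} (hk : 0 < k) :
    EventuallyPeriodic (arithProg a k) :=
  ⟨a, k, hk, isPeriodicFrom_arithProg a k⟩

namespace EventuallyPeriodic

theorem empty : EventuallyPeriodic ∅ := ⟨0, 1, one_pos, fun _ _ => Iff.rfl⟩

theorem of_finite {F : Set ℕ} (hF : F.Finite) : EventuallyPeriodic F := by
  obtain ⟨B, hB⟩ := hF.bddAbove
  exact ⟨B + 1, 1, one_pos, isPeriodicFrom_of_subset_Iio fun x hx => Nat.lt_succ_of_le (hB hx)⟩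

theorem union {L L' : Set ℕ} (h : EventuallyPeriodic L) (h' : EventuallyPeriodic L') :
    EventuallyPeriodic (L ∪ L') := by
  obtain ⟨N, p, hp, hL⟩ := h
  obtain ⟨N', p', hp', hL'⟩ := h'
  exact ⟨_, _, Nat.mul_pos hp hp', hL.union hL'⟩

theorem iUnion {ι : Type*} [Fintype ι] {f : ι → Set ℕ} (h : ∀ i, EventuallyPeriodic (f i)) :
    EventuallyPeriodic (⋃ i, f i) := by
  rw [← iSup_eq_iUnion, ← Finset.sup_univ_eq_iSup]
  exact Finset.sup_induction empty (fun _ h₁ _ h₂ => h₁.union h₂) fun i _ => h i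

end EventuallyPeriodic

theorem AddMonoidHom.eventuallyPeriodic_preimage {M : Type*} [AddMonoid M] [Finite M]
    (φ : ℕ →+ M) (Z : Set M) : EventuallyPeriodic (φ ⁻¹' Z) := by
  obtain ⟨i, j, hne, heq⟩ := Finite.exists_ne_map_eq_of_infinite φ
  wlog hij : i < j generalizing i j
  · exact this j i hne.symm heq.symm (by omega)
  refine ⟨i, j - i, by omega, fun n hn => ?_⟩
  have hφ : φ (n + (j - i)) = φ n := by
    rw [show n + (j - i) = n - i + j by omega, map_add, ← heq, ← map_add,
      show n - i + i = n by omega]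
  simp only [mem_preimage, hφ]

def eventualModCon (N p : ℕ) : AddCon ℕ where
  r x y := x = y ∨ (N ≤ x ∧ N ≤ y ∧ x ≡ y [MOD p])
  iseqv :=
    { refl := fun _ => Or.inl rfl
      symm := by
        rintro x y (rfl | ⟨hx, hy, hxy⟩)
        exacts [Or.inl rfl, Or.inr ⟨hy, hx, hxy.symm⟩]
      trans := by
        rintro x y z (rfl | ⟨hx, hy, hxy⟩) (rfl | ⟨hy', hz, hyz⟩)
        exacts [Or.inl rfl, Or.inr ⟨hy', hz, hyz⟩, Or.inr ⟨hx, hy, hxy⟩,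
          Or.inr ⟨hx, hz, hxy.trans hyz⟩] }
  add' := by
    rintro w x y z (rfl | ⟨hw, hx, hwx⟩) (rfl | ⟨hy, hz, hyz⟩)
    exacts [Or.inl rfl, Or.inr ⟨by omega, by omega, hyz.add_left w⟩,
      Or.inr ⟨by omega, by omega, hwx.add_right y⟩, Or.inr ⟨by omega, by omega, hwx.add hyz⟩]

namespace eventualModCon

theorem exists_lt_rel (N p n : ℕ) (hp : 0 < p) : ∃ r < N + p, eventualModCon N p r n := by
  by_cases hn : n < N
  · exact ⟨n, by omega, Or.inl rfl⟩
  have hmod := Nat.mod_lt (n - N) hp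
  refine ⟨N + (n - N) % p, by omega, Or.inr ⟨by omega, by omega, ?_⟩⟩
  calc N + (n - N) % p ≡ N + (n - N) [MOD p] := (Nat.mod_modEq _ _).add_left N
    _ = n := by omega

instance finite_quotient (N p : ℕ) [NeZero p] : Finite (eventualModCon N p).Quotient := by
  refine Finite.of_surjective (fun r : Fin (N + p) => (eventualModCon N p).mk' r) ?_
  intro q
  obtain ⟨n, rfl⟩ := (eventualModCon N p).mk'_surjective q
  obtain ⟨r, hr, hrn⟩ := exists_lt_rel N p n (NeZero.pos p)
  exact ⟨⟨r, hr⟩, (AddCon.eq _).mpr hrn⟩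

theorem preimage_image_mk' {L : Set ℕ} {N p : ℕ} (hL : IsPeriodicFrom L N p) :
    (eventualModCon N p).mk' ⁻¹' ((eventualModCon N p).mk' '' L) = L := by
  refine Subset.antisymm ?_ (subset_preimage_image _ _)
  rintro x ⟨y, hy, hyx⟩
  rcases (AddCon.eq _).mp hyx with rfl | ⟨hNy, hNx, hyx⟩
  exacts [hy, (hL.mem_iff_of_modEq hNy hNx hyx).mp hy]

end eventualModCon

namespace EventuallyPeriodic

variable {L : Set ℕ}

theorem recognizable (h : EventuallyPeriodic L) : Recognizable L := by
  obtain ⟨N, p, hp, hL⟩ := h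
  have : NeZero p := ⟨hp.ne'⟩
  exact ⟨_, inferInstance, inferInstance, (eventualModCon N p).mk', _,
    (eventualModCon.preimage_image_mk' hL).symm⟩

theorem eq_union_iUnion_arithProg {N p : ℕ} (hp : 0 < p) (hL : IsPeriodicFrom L N p) :
    L = (L ∩ Iio N) ∪ ⋃ r : {r : Fin p // N + r ∈ L}, arithProg (N + r.1) p := by
  ext y
  simp only [mem_union, mem_inter_iff, mem_Iio, mem_iUnion]
  constructor
  · intro hy
    by_cases hyN : y < N
    · exact Or.inl ⟨hy, hyN⟩
    have hdecomp : y = N + (y - N) % p + p * ((y - N) / p) := by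
      have := Nat.mod_add_div (y - N) p
      omega
    have hr : N + (y - N) % p ∈ L := by
      rw [← hL.add_mul_mem_iff (by omega) ((y - N) / p), ← hdecomp]
      exact hy
    exact Or.inr ⟨⟨⟨(y - N) % p, Nat.mod_lt _ hp⟩, hr⟩, _, hdecomp⟩
  · rintro (⟨hy, -⟩ | ⟨⟨r, hr⟩, m, rfl⟩)
    exacts [hy, (hL.add_mul_mem_iff (by omega) m).mpr hr]

theorem exists_eq_union_iUnion_arithProg (h : EventuallyPeriodic L) :
    ∃ F : Set ℕ, F.Finite ∧
      ∃ (n : ℕ) (a k : Fin n → ℕ), (∀ i, 1 ≤ k i) ∧ L = F ∪ ⋃ i, arithProg (a i) (k i) := by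
  obtain ⟨N, p, hp, hL⟩ := h
  set e := (Finite.equivFin {r : Fin p // N + r ∈ L}).symm
  refine ⟨L ∩ Iio N, (finite_Iio N).subset inter_subset_right, _, fun i => N + (e i).1,
    fun _ => p, fun _ => hp, ?_⟩
  rw [e.surjective.iUnion_comp fun r => arithProg (N + r.1) p]
  exact eq_union_iUnion_arithProg hp hL

end EventuallyPeriodic

theorem stmt_9 (L : Set ℕ) :
    Recognizable L ↔
      ∃ F : Set ℕ, F.Finite ∧
        ∃ (n : ℕ) (a k : Fin n → ℕ), (∀ i, 1 ≤ k i) ∧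
          L = F ∪ ⋃ i : Fin n, {x : ℕ | ∃ m : ℕ, x = a i + k i * m} := by
  constructor
  · rintro ⟨M, _, _, φ, Z, rfl⟩
    exact (φ.eventuallyPeriodic_preimage Z).exists_eq_union_iUnion_arithProg
  · rintro ⟨F, hF, n, a, k, hk, rfl⟩
    exact ((EventuallyPeriodic.of_finite hF).union
      (EventuallyPeriodic.iUnion fun i => eventuallyPeriodic_arithProg (hk i))).recognizable
end

section
/- Let a ∈ ℕ, k ≥ 1, and L = {a + k·n | n ∈ ℕ}. Define the syntactic congruence of L in ⟨ℕ,Suc⟩ by: x ∼_L y iff for all n ∈ ℕ, (x + n ∈ L ⟺ y + n ∈ L). Then, letting b = a − k + 1 if a ≥ k − 1 and b = 0 otherwise (i.e., b = max(0, a−k+1)), for all x, y ∈ ℕ: x ∼_L y if and only if (x = y, or b ≤ x and b ≤ y and x ≡ y (mod k)). -/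
private lemma mem_iff_aux (a k z : ℕ) :
    (∃ n : ℕ, z = a + k * n) ↔ a ≤ z ∧ z ≡ a [MOD k] := by
  constructor
  · rintro ⟨n, rfl⟩
    exact ⟨Nat.le_add_right _ _,
      ((Nat.modEq_iff_dvd' (Nat.le_add_right _ _)).2 ⟨n, by omega⟩).symm⟩
  · rintro ⟨hle, hmod⟩
    obtain ⟨c, hc⟩ := (Nat.modEq_iff_dvd' hle).1 hmod.symm
    exact ⟨c, by omega⟩

-- one-sided backward helper
private lemma back_aux (a k x y : ℕ) (hk : 1 ≤ k)
    (hby : a + 1 - k ≤ y) (hmod : x ≡ y [MOD k]) (n : ℕ)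
    (h : ∃ m : ℕ, x + n = a + k * m) : ∃ m : ℕ, y + n = a + k * m := by
  have hby' : a + 1 ≤ y + k := by omega
  clear hby
  rw [mem_iff_aux] at h ⊢
  obtain ⟨hle, hm⟩ := h
  have hym : y + n ≡ a [MOD k] := (Nat.ModEq.add_right n hmod.symm).trans hm
  refine ⟨?_, hym⟩
  by_contra hlt
  push_neg at hlt
  obtain ⟨c, hc⟩ := (Nat.modEq_iff_dvd' (Nat.le_of_lt hlt)).1 hym
  have hc1 : 1 ≤ c := by
    rcases Nat.eq_zero_or_pos c with h0 | h1
    · subst h0; simp at hc; omega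
    · exact h1
  have : k ≤ k * c := Nat.le_mul_of_pos_right k hc1
  omega

-- forward helpers (asymmetric)
private lemma fwd_mod (a k x y : ℕ) (hk : 1 ≤ k)
    (h : ∀ n : ℕ, (∃ m : ℕ, x + n = a + k * m) ↔ (∃ m : ℕ, y + n = a + k * m))
    (hxy : x ≤ y) : x ≡ y [MOD k] := by
  have hge : x + y ≤ k * (x + y) := Nat.le_mul_of_pos_left _ hk
  have hx : x + (a + k * (x + y) - x) = a + k * (x + y) := by omega
  obtain ⟨m, hm⟩ := (h _).1 ⟨x + y, hx⟩
  have h1 : x + (a + k * (x + y) - x) ≡ a [MOD k] :=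
    ((Nat.modEq_iff_dvd' (by omega)).2 ⟨x + y, by omega⟩).symm
  have h2 : y + (a + k * (x + y) - x) ≡ a [MOD k] :=
    ((Nat.modEq_iff_dvd' (by omega)).2 ⟨m, by omega⟩).symm
  exact Nat.ModEq.add_right_cancel' _ (h1.trans h2.symm)

private lemma fwd_le (a k x y : ℕ) (hk : 1 ≤ k)
    (h : ∀ n : ℕ, (∃ m : ℕ, x + n = a + k * m) ↔ (∃ m : ℕ, y + n = a + k * m))
    (hxy : x < y) : a + 1 - k ≤ x := by
  by_contra hlt
  push_neg at hlt
  have hxk : x + k ≤ a := by omega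
  clear hlt
  have hmod := fwd_mod a k x y hk h (Nat.le_of_lt hxy)
  obtain ⟨c, hc⟩ := (Nat.modEq_iff_dvd' (Nat.le_of_lt hxy)).1 hmod
  have hc1 : 1 ≤ c := by
    rcases Nat.eq_zero_or_pos c with h0 | h1
    · subst h0; simp at hc; omega
    · exact h1
  obtain ⟨d, hd⟩ : ∃ d, c = d + 1 := ⟨c - 1, by omega⟩
  have hkd : k * c = k * d + k := by rw [hd]; ring
  have hy : y + (a - x - k) = a + k * d := by omega
  obtain ⟨m, hm⟩ := (h (a - x - k)).2 ⟨d, hy⟩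
  omega

theorem stmt_10 (a k : ℕ) (hk : 1 ≤ k) (L : Set ℕ)
    (hL : L = {x : ℕ | ∃ n : ℕ, x = a + k * n}) :
    ∀ x y : ℕ,
      -- syntactic congruence of L in ⟨ℕ,Suc⟩
      (∀ n : ℕ, x + n ∈ L ↔ y + n ∈ L) ↔
      -- coincides with ≡_{b,k} where b = max(0, a-k+1) = a+1-k (truncated)
      (x = y ∨ ((a + 1 - k) ≤ x ∧ (a + 1 - k) ≤ y ∧ x ≡ y [MOD k])) := by
  subst hL
  intro x y
  simp only [Set.mem_setOf_eq]
  constructor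
  · intro h
    rcases Nat.lt_trichotomy x y with hlt | heq | hgt
    · have h1 := fwd_le a k x y hk h hlt
      exact Or.inr ⟨h1, by omega, fwd_mod a k x y hk h (Nat.le_of_lt hlt)⟩
    · exact Or.inl heq
    · have h' : ∀ n : ℕ, (∃ m : ℕ, y + n = a + k * m) ↔ (∃ m : ℕ, x + n = a + k * m) :=
        fun n => (h n).symm
      have h1 := fwd_le a k y x hk h' hgt
      exact Or.inr ⟨by omega, h1, (fwd_mod a k y x hk h' (Nat.le_of_lt hgt)).symm⟩
  · rintro (rfl | ⟨hbx, hby, hmod⟩)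
    · intro n; rfl
    · intro n
      exact ⟨back_aux a k x y hk hby hmod n, back_aux a k y x hk hbx hmod.symm n⟩
end

section
/- There exists a function g : ℕ → ℕ that is congruence preserving for ⟨ℕ,+⟩ but not monotone non-decreasing (i.e., there exist x < y with g(x) > g(y)); hence g does not preserve all stable preorders of ⟨ℕ,+⟩. -/
/-- A stable preorder on ⟨ℕ,+⟩: a reflexive transitive relation compatible with addition. -/
def IsStablePreorderN (r : ℕ → ℕ → Prop) : Prop :=
  (∀ x, r x x) ∧ (∀ x y z : ℕ, r x y → r y z → r x z) ∧
    (∀ x y z : ℕ, r x y → r (x + z) (y + z))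

/-- our witness function: g(n) = 2n² - 4n + 3 -/
def gfun : ℕ → ℕ := fun n => 2 * n * n + 3 - 4 * n

lemma gfun_aux (n : ℕ) : 4 * n ≤ 2 * n * n + 3 := by nlinarith [sq_nonneg n, Nat.zero_le n]

lemma gfun_cast (n : ℕ) : (gfun n : ℤ) = 2 * n * n + 3 - 4 * n := by
  unfold gfun
  have := gfun_aux n
  push_cast [Nat.cast_sub this]
  ring

lemma gfun_ge (n : ℕ) : n ≤ gfun n := by
  have h := gfun_cast n
  have : (n : ℤ) ≤ (gfun n : ℤ) := by
    rw [h]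
    nlinarith [sq_nonneg ((n : ℤ) - 1), sq_nonneg (2 * (n : ℤ) - 3)]
  exact_mod_cast this

lemma gfun_dvd {x y : ℕ} (h : x ≤ y) : ((y - x : ℕ) : ℤ) ∣ (gfun y : ℤ) - gfun x := by
  rw [gfun_cast, gfun_cast, Nat.cast_sub h]
  exact ⟨2 * x + 2 * y - 4, by ring⟩

lemma chain {r : ℕ → ℕ → Prop} (hr : IsCongruenceN r) {x y : ℕ} (hxy : r x y) (h : x ≤ y) :
    ∀ k a, x ≤ a → r a (a + k * (y - x)) := by
  obtain ⟨heq, hadd⟩ := hr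
  have h1 : r x (x + (y - x)) := by
    rw [Nat.add_sub_cancel' h]; exact hxy
  have h2 : ∀ k, r x (x + k * (y - x)) := by
    intro k
    induction k with
    | zero => simpa using heq.refl x
    | succ n ih =>
      have h3 := hadd _ _ (n * (y - x)) h1
      have h4 : x + (y - x) + n * (y - x) = x + (n + 1) * (y - x) := by ring
      rw [h4] at h3
      exact heq.trans ih h3
  intro k a ha
  have h5 := hadd _ _ (a - x) (h2 k)
  have e1 : x + (a - x) = a := Nat.add_sub_cancel' ha
  have e2 : x + k * (y - x) + (a - x) = a + k * (y - x) := by omega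
  rwa [e1, e2] at h5

lemma main_le {r : ℕ → ℕ → Prop} (hr : IsCongruenceN r) {x y : ℕ} (hxy : r x y) (h : x ≤ y) :
    r (gfun x) (gfun y) := by
  rcases eq_or_lt_of_le h with rfl | hlt
  · exact hr.1.refl _
  have hdvd := gfun_dvd h
  rcases le_total (gfun x) (gfun y) with hg | hg
  · have hdvdn : (y - x) ∣ (gfun y - gfun x) := by
      have h2 : ((y - x : ℕ) : ℤ) ∣ ((gfun y - gfun x : ℕ) : ℤ) := by
        rwa [Nat.cast_sub hg]
      exact_mod_cast h2
    obtain ⟨k, hk⟩ := hdvdn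
    have hc := chain hr hxy h k (gfun x) (gfun_ge x)
    have e : gfun x + k * (y - x) = gfun y := by
      rw [mul_comm, ← hk]; omega
    rwa [e] at hc
  · have hdvdn : (y - x) ∣ (gfun x - gfun y) := by
      have h2 : ((y - x : ℕ) : ℤ) ∣ ((gfun x - gfun y : ℕ) : ℤ) := by
        rw [Nat.cast_sub hg]
        have h3 := dvd_neg.mpr hdvd
        rwa [neg_sub] at h3
      exact_mod_cast h2
    obtain ⟨k, hk⟩ := hdvdn
    have hy : x ≤ gfun y := le_trans h (gfun_ge y)
    have hc := chain hr hxy h k (gfun y) hy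
    have e : gfun y + k * (y - x) = gfun x := by
      rw [mul_comm, ← hk]; omega
    rw [e] at hc
    exact hr.1.symm hc

theorem stmt_12 :
    ∃ g : ℕ → ℕ,
      (∀ r : ℕ → ℕ → Prop, IsCongruenceN r → ∀ x y : ℕ, r x y → r (g x) (g y)) ∧
      (∃ x y : ℕ, x < y ∧ g y < g x) ∧
      ¬ (∀ r : ℕ → ℕ → Prop, IsStablePreorderN r →
          ∀ x y : ℕ, r x y → r (g x) (g y)) := by
  refine ⟨gfun, ?_, ⟨0, 1, by norm_num, by norm_num [gfun]⟩, ?_⟩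
  · intro r hr x y hxy
    rcases le_total x y with h | h
    · exact main_le hr hxy h
    · exact hr.1.symm (main_le hr (hr.1.symm hxy) h)
  · intro hcontra
    have hle : IsStablePreorderN (· ≤ ·) :=
      ⟨le_refl, fun _ _ _ => le_trans, fun x y z h => by omega⟩
    have := hcontra _ hle 0 1 (by norm_num)
    norm_num [gfun] at this
end

section
/- For every function f : ℕ → ℕ there exists a function g : ℕ → ℤ such that: (i) for all x, y ∈ ℕ, the integer (x − y) divides g(x) − g(y); and (ii) for all x ∈ ℕ, f(x) − 2^x·lcm(x) ≤ g(x) ≤ f(x), where lcm(x) denotes the least common multiple of the integers 1, 2, …, x (with lcm(0) = 1). -/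
/-!
Build `g` greedily: once `g` is fixed on `0, …, n - 1`, the admissible values of `g n` are the
solutions of the congruences `g n ≡ g y [ZMOD n - y]`, `y < n`. These are compatible: for a prime
power `p ^ k ∣ n - y`, the congruence modulo `p ^ k` is already implied by the one for
`y' = n - p ^ (log p n)`, because `p ^ k ∣ y - y'`. So the Chinese remainder theorem for the
coprime moduli `p ^ (log p n)`, `p ≤ n` prime, yields a solution, and the solution set is
invariant under shifts by `lcmUpTo n`, which allows placing `g n` in `(f n - lcmUpTo n, f n]`.
-/

/-- `lcmUpTo x` is the least common multiple of `1, 2, …, x` (with `lcmUpTo 0 = 1`). -/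
def lcmUpTo (x : ℕ) : ℕ := (Finset.Icc 1 x).lcm id

theorem Int.exists_forall_prime_pow_dvd_sub (s : Finset ℕ) (hs : ∀ p ∈ s, p.Prime)
    (e : ℕ → ℕ) (t : ℕ → ℤ) : ∃ v : ℤ, ∀ p ∈ s, (p : ℤ) ^ e p ∣ v - t p := by
  have hcop : Pairwise (Function.onFun IsCoprime fun p : s ↦ Ideal.span {(p : ℤ) ^ e p}) := by
    intro p q hpq
    rw [Function.onFun, Ideal.isCoprime_span_singleton_iff]
    exact .pow <| Nat.Coprime.isCoprime <|
      (Nat.coprime_primes (hs p p.2) (hs q q.2)).2 (Subtype.coe_ne_coe.2 hpq)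
  obtain ⟨v, hv⟩ := Ideal.exists_forall_sub_mem_ideal hcop fun p ↦ t p
  exact ⟨v, fun p hp ↦ Ideal.mem_span_singleton.1 (hv ⟨p, hp⟩)⟩

theorem exists_sub_dvd_sub_of_sub_dvd_sub (n : ℕ) (g : ℕ → ℤ)
    (hg : ∀ y < n, ∀ z < n, ((y : ℤ) - z) ∣ g y - g z) :
    ∃ v : ℤ, ∀ y < n, ((n : ℤ) - y) ∣ v - g y := by
  obtain ⟨v, hv⟩ := Int.exists_forall_prime_pow_dvd_sub ({p ∈ Finset.range (n + 1) | p.Prime})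
    (fun p hp ↦ (Finset.mem_filter.1 hp).2) (fun p ↦ Nat.log p n) (fun p ↦ g (n - p ^ Nat.log p n))
  refine ⟨v, fun y hy ↦ ?_⟩
  rw [← Nat.cast_sub hy.le, Int.natCast_dvd, Nat.dvd_iff_prime_pow_dvd_dvd]
  intro p k hp hpk
  rcases k.eq_zero_or_pos with rfl | hk
  · simp
  set b := Nat.log p n
  have hkd : p ^ k ≤ n - y := Nat.le_of_dvd (by omega) hpk
  have hpn : p ≤ n := (Nat.le_self_pow hk.ne' p).trans (by omega)
  have hkb : k ≤ b := Nat.le_log_of_pow_le hp.one_lt (by omega)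
  have hbn : p ^ b ≤ n := Nat.pow_log_le_self p (by omega)
  have hb : 0 < p ^ b := pow_pos hp.pos b
  have hpk_pb : (p : ℤ) ^ k ∣ (p : ℤ) ^ b := pow_dvd_pow _ hkb
  rw [← Int.natCast_dvd, Nat.cast_pow]
  have hv' : (p : ℤ) ^ k ∣ v - g (n - p ^ b) :=
    hpk_pb.trans (hv p (Finset.mem_filter.2 ⟨Finset.mem_range.2 (by omega), hp⟩))
  have hg' : (p : ℤ) ^ k ∣ g (n - p ^ b) - g y := by
    refine dvd_trans ?_ (hg _ (by omega) y hy)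
    rw [show ((n - p ^ b : ℕ) : ℤ) - y = ((n - y : ℕ) : ℤ) - (p : ℤ) ^ b by
      push_cast [hbn, hy.le]; ring]
    exact dvd_sub (by exact_mod_cast hpk) hpk_pb
  simpa using dvd_add hv' hg'

theorem dvd_lcmUpTo {d n : ℕ} (hd : 1 ≤ d) (hdn : d ≤ n) : d ∣ lcmUpTo n :=
  Finset.dvd_lcm (Finset.mem_Icc.2 ⟨hd, hdn⟩)

theorem lcmUpTo_pos (n : ℕ) : 0 < lcmUpTo n := by
  refine Nat.pos_of_ne_zero fun h ↦ ?_
  obtain ⟨x, hx, hx0⟩ := Finset.lcm_eq_zero_iff.1 h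
  simp_all

theorem exists_sub_dvd_sub_mem_Ioc (n : ℕ) (g : ℕ → ℤ)
    (hg : ∀ y < n, ∀ z < n, ((y : ℤ) - z) ∣ g y - g z) (b : ℤ) :
    ∃ v : ℤ, (∀ y < n, ((n : ℤ) - y) ∣ v - g y) ∧ v ∈ Set.Ioc (b - lcmUpTo n) b := by
  obtain ⟨v, hv⟩ := exists_sub_dvd_sub_of_sub_dvd_sub n g hg
  have hL : (0 : ℤ) < lcmUpTo n := by exact_mod_cast lcmUpTo_pos n
  obtain ⟨hlow, hup⟩ := toIocMod_mem_Ioc hL (b - lcmUpTo n) v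
  refine ⟨toIocMod hL (b - lcmUpTo n) v, fun y hy ↦ ?_, hlow, by linarith⟩
  have hyL : ((n : ℤ) - y) ∣ lcmUpTo n := by
    rw [← Nat.cast_sub hy.le]
    exact Int.natCast_dvd_natCast.2 (dvd_lcmUpTo (by omega) (by omega))
  rw [← sub_add_sub_cancel (toIocMod _ _ v) v, toIocMod_sub_self, smul_eq_mul]
  exact dvd_add (hyL.mul_left _) (hv y hy)

theorem sub_dvd_sub_of_forall_lt {g : ℕ → ℤ} {n : ℕ}
    (h : ∀ x < n, ∀ y < x, ((x : ℤ) - y) ∣ g x - g y) :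
    ∀ x < n, ∀ y < n, ((x : ℤ) - y) ∣ g x - g y := by
  intro x hx y hy
  rcases lt_trichotomy x y with hxy | rfl | hxy
  · rw [← neg_sub, neg_dvd, dvd_sub_comm]
    exact h y hy x hxy
  · simp
  · exact h x hx y hxy

def IsAdmissible (f : ℕ → ℕ) (n : ℕ) (prev : Fin n → ℤ) (v : ℤ) : Prop :=
  (∀ y : Fin n, ((n : ℤ) - y) ∣ v - prev y) ∧ (f n : ℤ) - lcmUpTo n < v ∧ v ≤ f n

noncomputable def greedy (f : ℕ → ℕ) (n : ℕ) : ℤ :=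
  Classical.epsilon (IsAdmissible f n fun y ↦ greedy f y)

theorem greedy_spec (f : ℕ → ℕ) (n : ℕ) :
    (∀ y < n, ((n : ℤ) - y) ∣ greedy f n - greedy f y) ∧
      (f n : ℤ) - lcmUpTo n < greedy f n ∧ greedy f n ≤ f n := by
  induction n using Nat.strong_induction_on with
  | _ n ih =>
    have hcompat := sub_dvd_sub_of_forall_lt fun x hx y hy ↦ (ih x hx).1 y hy
    obtain ⟨v, hv, hlow, hup⟩ := exists_sub_dvd_sub_mem_Ioc n (greedy f) hcompat (f n)
    obtain ⟨hdvd, hbounds⟩ := Classical.epsilon_spec (p := IsAdmissible f n fun y ↦ greedy f y)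
      ⟨v, fun y ↦ hv y y.2, hlow, hup⟩
    rw [greedy]
    exact ⟨fun y hy ↦ hdvd ⟨y, hy⟩, hbounds⟩

theorem stmt_13 (f : ℕ → ℕ) :
    ∃ g : ℕ → ℤ,
      -- (i) x - y divides g(x) - g(y)
      (∀ x y : ℕ, ((x : ℤ) - (y : ℤ)) ∣ (g x - g y)) ∧
      -- (ii) f(x) - 2^x·lcm(x) ≤ g(x) ≤ f(x)
      (∀ x : ℕ, (f x : ℤ) - 2 ^ x * (lcmUpTo x : ℤ) ≤ g x ∧ g x ≤ (f x : ℤ)) := by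
  refine ⟨greedy f, fun x y ↦ ?_, fun x ↦ ?_⟩
  · exact sub_dvd_sub_of_forall_lt (n := max x y + 1) (fun a _ b hb ↦ (greedy_spec f a).1 b hb)
      x (by omega) y (by omega)
  · obtain ⟨-, hlow, hup⟩ := greedy_spec f x
    have hL : (lcmUpTo x : ℤ) ≤ 2 ^ x * lcmUpTo x :=
      le_mul_of_one_le_left (by positivity) (one_le_pow₀ (by norm_num))
    exact ⟨by linarith, hup⟩
end

section
/- Let S be a semigroup and ≼ a preorder on S that is stable (x ≼ y implies x·z ≼ y·z and z·x ≼ z·y for all z), cancellable (x·z ≼ y·z implies x ≼ y, and z·x ≼ z·y implies x ≼ y), and of finite index, i.e., the associated equivalence relation x ≈ y ⇔ (x ≼ y and y ≼ x) has finitely many equivalence classes. Then ≼ coincides with ≈; in particular ≼ is symmetric: x ≼ y implies y ≼ x. -/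
private def pw {S : Type*} [Semigroup S] (a : S) : ℕ → S
  | 0 => a
  | n + 1 => pw a n * a

private lemma pw_add {S : Type*} [Semigroup S] (a : S) (m n : ℕ) :
    pw a (m + n + 1) = pw a m * pw a n := by
  induction n with
  | zero => rfl
  | succ n ih =>
      show pw a (m + n + 1) * a = pw a m * (pw a n * a)
      rw [ih, mul_assoc]

private def EE {S : Type*} (r : S → S → Prop) (a b : S) : Prop := r a b ∧ r b a

private lemma aux_pigeon {S : Type*} [Semigroup S] (r : S → S → Prop)
    (hrefl : ∀ x, r x x)
    (hfin : Set.Finite {s : Set S | ∃ x : S, s = {y | r x y ∧ r y x}})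
    (a : S) : ∃ m n : ℕ, m < n ∧ EE r (pw a m) (pw a n) := by
  haveI := hfin.to_subtype
  obtain ⟨i, j, hne, heq⟩ := Finite.exists_ne_map_eq_of_infinite
    (fun k : ℕ => (⟨{y | r (pw a k) y ∧ r y (pw a k)}, pw a k, rfl⟩ :
      {s : Set S | ∃ x : S, s = {y | r x y ∧ r y x}}))
  have key : ∀ i j : ℕ, ({y | r (pw a i) y ∧ r y (pw a i)} : Set S) =
      {y | r (pw a j) y ∧ r y (pw a j)} → EE r (pw a i) (pw a j) := by
    intro i j h
    have : pw a j ∈ ({y | r (pw a i) y ∧ r y (pw a i)} : Set S) := by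
      rw [h]; exact ⟨hrefl _, hrefl _⟩
    exact ⟨this.1, this.2⟩
  have hs := congrArg Subtype.val heq
  rcases lt_or_gt_of_ne hne with h | h
  · exact ⟨i, j, h, key i j hs⟩
  · exact ⟨j, i, h, key j i hs.symm⟩

private lemma aux_power {S : Type*} [Semigroup S] (r : S → S → Prop)
    (hrefl : ∀ x, r x x)
    (htrans : ∀ x y z, r x y → r y z → r x z)
    (hstabR : ∀ x y z : S, r x y → r (x * z) (y * z))
    (hfin : Set.Finite {s : Set S | ∃ x : S, s = {y | r x y ∧ r y x}})
    (a : S) : ∃ q : ℕ, 1 ≤ q ∧ EE r (pw a q) (pw a (q + q + 1)) := by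
  obtain ⟨m, n, hmn, h⟩ := aux_pigeon r hrefl hfin a
  have EE_trans : ∀ {u v w : S}, EE r u v → EE r v w → EE r u w :=
    fun h1 h2 => ⟨htrans _ _ _ h1.1 h2.1, htrans _ _ _ h2.2 h1.2⟩
  have shift : ∀ (i u v : ℕ), EE r (pw a u) (pw a v) →
      EE r (pw a (u + i)) (pw a (v + i)) := by
    intro i
    induction i with
    | zero => intro u v h; exact h
    | succ i ih =>
        intro u v h
        have h2 := ih u v h
        exact ⟨hstabR _ _ a h2.1, hstabR _ _ a h2.2⟩
  obtain ⟨d, rfl⟩ : ∃ d, n = m + (d + 1) := ⟨n - m - 1, by omega⟩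
  have iter : ∀ j : ℕ, EE r (pw a m) (pw a (m + (j + 1) * (d + 1))) := by
    intro j
    induction j with
    | zero => simpa using h
    | succ j ih =>
        have h2 := shift ((j + 1) * (d + 1)) m (m + (d + 1)) h
        have earith : m + (d + 1) + (j + 1) * (d + 1) = m + (j + 1 + 1) * (d + 1) := by
          ring
        rw [earith] at h2
        exact EE_trans ih h2
  set P := (m + 2) * (d + 1) with hPdef
  have hP : m + 2 ≤ P := by
    have : (m + 2) * 1 ≤ (m + 2) * (d + 1) := by
      apply Nat.mul_le_mul_left; omega
    omega
  refine ⟨P - 1, by omega, ?_⟩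
  have hbase : EE r (pw a m) (pw a (m + P)) := by
    have := iter (m + 1)
    have earith : (m + 1 + 1) * (d + 1) = P := by rw [hPdef]
    rwa [earith] at this
  have h2 := shift (P - 1 - m) m (m + P) hbase
  have e1 : m + (P - 1 - m) = P - 1 := by omega
  have e2 : m + P + (P - 1 - m) = (P - 1) + (P - 1) + 1 := by omega
  rwa [e1, e2] at h2

private lemma aux_id {S : Type*} [Semigroup S] (r : S → S → Prop)
    (hstabR : ∀ x y z : S, r x y → r (x * z) (y * z))
    (hstabL : ∀ x y z : S, r x y → r (z * x) (z * y))
    (hcancR : ∀ x y z : S, r (x * z) (y * z) → r x y)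
    (hcancL : ∀ x y z : S, r (z * x) (z * y) → r x y)
    {f : S} (hf : EE r f (f * f)) :
    ∀ b : S, EE r (f * b) b ∧ EE r (b * f) b := by
  intro b
  constructor
  · constructor
    · apply hcancL _ _ f
      have h1 : r ((f * f) * b) (f * b) := hstabR _ _ b hf.2
      rwa [mul_assoc] at h1
    · apply hcancL _ _ f
      have h1 : r (f * b) ((f * f) * b) := hstabR _ _ b hf.1
      rwa [mul_assoc] at h1
  · constructor
    · apply hcancR _ _ f
      have h1 : r (b * (f * f)) (b * f) := hstabL _ _ b hf.2
      rwa [← mul_assoc] at h1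
    · apply hcancR _ _ f
      have h1 : r (b * f) (b * (f * f)) := hstabL _ _ b hf.1
      rwa [← mul_assoc] at h1

theorem stmt_15 {S : Type*} [Semigroup S] (r : S → S → Prop)
    (hrefl : ∀ x, r x x)
    (htrans : ∀ x y z, r x y → r y z → r x z)
    -- stable
    (hstabR : ∀ x y z : S, r x y → r (x * z) (y * z))
    (hstabL : ∀ x y z : S, r x y → r (z * x) (z * y))
    -- cancellable
    (hcancR : ∀ x y z : S, r (x * z) (y * z) → r x y)
    (hcancL : ∀ x y z : S, r (z * x) (z * y) → r x y)
    -- finite index: the associated equivalence has finitely many classes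
    (hfin : Set.Finite {s : Set S | ∃ x : S, s = {y | r x y ∧ r y x}}) :
    ∀ x y : S, r x y → r y x := by
  intro x y hxy
  obtain ⟨q, hq1, hq⟩ := aux_power r hrefl htrans hstabR hfin x
  obtain ⟨q', rfl⟩ : ∃ q', q = q' + 1 := ⟨q - 1, by omega⟩
  set e := pw x (q' + 1) with hedef
  have hee : EE r e (e * e) := by
    have : e * e = pw x ((q' + 1) + (q' + 1) + 1) := (pw_add x (q' + 1) (q' + 1)).symm
    rw [this]; exact hq
  have hide := aux_id r hstabR hstabL hcancR hcancL hee
  -- g = x^q' * y  (exponent q'+1 copies of x replaced last one by y)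
  set g := pw x q' * y with hgdef
  have hex : e = pw x q' * x := rfl
  have hreg : r e g := by
    rw [hex, hgdef]; exact hstabL x y (pw x q') hxy
  obtain ⟨s, hs1, hsE⟩ := aux_power r hrefl htrans hstabR hfin g
  set f := pw g s with hfdef
  have hff : EE r f (f * f) := by
    have : f * f = pw g (s + s + 1) := (pw_add g s s).symm
    rw [this]; exact hsE
  have hidf := aux_id r hstabR hstabL hcancR hcancL hff
  -- r f e
  have hfe : r f e := by
    have h1 : r f (e * f) := (hide f).1.2
    have h2 : r (e * f) e := (hidf e).2.1
    exact htrans _ _ _ h1 h2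
  -- chain: r g (pw g t)
  have chain : ∀ t : ℕ, r g (pw g t) := by
    intro t
    induction t with
    | zero => exact hrefl g
    | succ t ih =>
        have h1 : r (pw g t) (pw g t * e) := (hide (pw g t)).2.2
        have h2 : r (pw g t * e) (pw g t * g) := hstabL e g (pw g t) hreg
        exact htrans _ _ _ ih (htrans _ _ _ h1 h2)
  have hge : r g e := htrans _ _ _ (chain s) hfe
  have hfinal : r (pw x q' * y) (pw x q' * x) := by
    rw [← hgdef, ← hex]; exact hge
  exact hcancL y x (pw x q') hfinal
end

section
/- Let G be a group and ≼ a preorder on G that is stable (x ≼ y implies x·z ≼ y·z and z·x ≼ z·y for all z ∈ G) and of finite index, i.e., the associated equivalence relation x ≈ y ⇔ (x ≼ y and y ≼ x) has finitely many classes. Then ≼ is symmetric, hence a congruence of G: x ≼ y implies y ≼ x. -/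
theorem stmt_16 {G : Type*} [Group G] (r : G → G → Prop)
    (hrefl : ∀ x, r x x)
    (htrans : ∀ x y z, r x y → r y z → r x z)
    -- stable
    (hstabR : ∀ x y z : G, r x y → r (x * z) (y * z))
    (hstabL : ∀ x y z : G, r x y → r (z * x) (z * y))
    -- finite index: the associated equivalence has finitely many classes
    (hfin : Set.Finite {s : Set G | ∃ x : G, s = {y | r x y ∧ r y x}}) :
    ∀ x y : G, r x y → r y x := by
  -- key: r 1 a → r a 1
  have key : ∀ a : G, r 1 a → r a 1 := by
    intro a ha
    -- r 1 a^j for all j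
    have hpow : ∀ j : ℕ, r 1 (a ^ j) := by
      intro j
      induction j with
      | zero => simpa using hrefl 1
      | succ j ih =>
        have h2 : r (a ^ j) (a ^ (j + 1)) := by
          have := hstabL 1 a (a ^ j) ha
          simpa [pow_succ, mul_comm] using this
        exact htrans _ _ _ ih h2
    -- find two powers in the same class
    have : Finite {s : Set G | ∃ x : G, s = {y | r x y ∧ r y x}} := hfin
    obtain ⟨m, n, hne, hmn⟩ := Finite.exists_ne_map_eq_of_infinite
      (fun n : ℕ =>
        (⟨{y | r (a ^ n) y ∧ r y (a ^ n)}, ⟨a ^ n, rfl⟩⟩ :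
          {s : Set G | ∃ x : G, s = {y | r x y ∧ r y x}}))
    -- extract r (a^n) (a^m) with m < n (wlog)
    have main : ∀ m n : ℕ, m < n →
        ({y | r (a ^ m) y ∧ r y (a ^ m)} : Set G) = {y | r (a ^ n) y ∧ r y (a ^ n)} →
        r a 1 := by
      intro m n hlt heq
      have hmem : a ^ m ∈ ({y | r (a ^ n) y ∧ r y (a ^ n)} : Set G) := by
        rw [← heq]; exact ⟨hrefl _, hrefl _⟩
      have h1 : r (a ^ n) (a ^ m) := hmem.1
      -- multiply on right by (a^m)⁻¹ : r (a^(n-m)) 1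
      have h2 : r (a ^ (n - m)) 1 := by
        have := hstabR (a ^ n) (a ^ m) (a ^ m)⁻¹ h1
        have hn : a ^ n * (a ^ m)⁻¹ = a ^ (n - m) := by
          rw [← zpow_natCast, ← zpow_natCast, ← zpow_natCast, ← zpow_neg, ← zpow_add]
          congr 1
          omega
        simpa [hn] using this
      -- r a (a^(n-m)) since n - m ≥ 1
      have h3 : r a (a ^ (n - m)) := by
        have := hstabL 1 (a ^ (n - m - 1)) a (hpow (n - m - 1))
        have hn : a * a ^ (n - m - 1) = a ^ (n - m) := by
          rw [← pow_succ']
          congr 1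
          omega
        simpa [hn] using this
      exact htrans _ _ _ h3 h2
    have hseq : Subtype.val (⟨{y | r (a ^ m) y ∧ r y (a ^ m)}, ⟨a ^ m, rfl⟩⟩ :
          {s : Set G | ∃ x : G, s = {y | r x y ∧ r y x}}) = Subtype.val
          (⟨{y | r (a ^ n) y ∧ r y (a ^ n)}, ⟨a ^ n, rfl⟩⟩ :
          {s : Set G | ∃ x : G, s = {y | r x y ∧ r y x}}) := by rw [hmn]
    simp only at hseq
    rcases lt_or_gt_of_ne hne with h | h
    · exact main m n h hseq
    · exact main n m h hseq.symm
  intro x y hxy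
  have h1 : r 1 (x⁻¹ * y) := by
    have := hstabL x y x⁻¹ hxy
    simpa using this
  have h2 : r (x⁻¹ * y) 1 := key _ h1
  have := hstabL (x⁻¹ * y) 1 x h2
  simpa [mul_assoc] using this
end

section
/- The algebra ⟨ℕ,+⟩ is sp-residually finite: for every stable preorder ≼ on ⟨ℕ,+⟩ and all x₀, y₀ ∈ ℕ with ¬(x₀ ≼ y₀), there exists a stable preorder ≼' on ⟨ℕ,+⟩ of finite index such that ≼ is contained in ≼' (x ≼ y implies x ≼' y for all x, y) and ¬(x₀ ≼' y₀). Equivalently, every stable preorder on ⟨ℕ,+⟩ is the intersection of a family of finite index stable preorders. -/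
/-- A relation has finite index if the associated equivalence
`x ≈ y ⇔ (r x y ∧ r y x)` has finitely many classes. -/
def FiniteIndexN (r : ℕ → ℕ → Prop) : Prop :=
  Set.Finite {s : Set ℕ | ∃ x : ℕ, s = {y | r x y ∧ r y x}}

def spcl (r : ℕ → ℕ → Prop) (x : ℕ) : Set ℕ := {y | r x y ∧ r y x}

lemma spcl_eq {r : ℕ → ℕ → Prop} (hr : IsStablePreorderN r) {x a : ℕ}
    (h1 : r x a) (h2 : r a x) : spcl r x = spcl r a := by
  obtain ⟨_, htrans, _⟩ := hr
  ext y
  constructor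
  · rintro ⟨h3, h4⟩; exact ⟨htrans _ _ _ h2 h3, htrans _ _ _ h4 h1⟩
  · rintro ⟨h3, h4⟩; exact ⟨htrans _ _ _ h1 h3, htrans _ _ _ h4 h2⟩

lemma finiteIndex_periodic {r : ℕ → ℕ → Prop} (hr : IsStablePreorderN r)
    {d M : ℕ} (hd : 0 < d) (h : ∀ a, M ≤ a → r a (a + d) ∧ r (a + d) a) :
    FiniteIndexN r := by
  have key : ∀ x : ℕ, ∃ x' : ℕ, x' < M + d ∧ spcl r x = spcl r x' := by
    intro x
    induction x using Nat.strong_induction_on with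
    | _ x ih =>
      by_cases hx : x < M + d
      · exact ⟨x, hx, rfl⟩
      · have hM : M ≤ x - d := by omega
        obtain ⟨h1, h2⟩ := h (x - d) hM
        have hxd : x - d + d = x := by omega
        rw [hxd] at h1 h2
        obtain ⟨x', hx', heq⟩ := ih (x - d) (by omega)
        exact ⟨x', hx', (spcl_eq hr h2 h1).trans heq⟩
  have hsub : {s : Set ℕ | ∃ x : ℕ, s = {y | r x y ∧ r y x}} ⊆ spcl r '' Set.Iio (M + d) := by
    rintro s ⟨x, rfl⟩
    obtain ⟨x', hx', heq⟩ := key x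
    exact ⟨x', hx', heq.symm⟩
  exact Set.Finite.subset ((Set.finite_Iio (M + d)).image _) hsub

lemma stable_rtClosure {s : ℕ → ℕ → Prop} (hs : ∀ x y z : ℕ, s x y → s (x + z) (y + z)) :
    IsStablePreorderN (Relation.ReflTransGen s) :=
  ⟨fun _ => .refl, fun _ _ _ h1 h2 => h1.trans h2, fun x y z h => by
    induction h with
    | refl => exact .refl
    | tail _ hbc ih => exact ih.tail (hs _ _ z hbc)⟩

lemma step_up {r : ℕ → ℕ → Prop} (hr : IsStablePreorderN r) {a d : ℕ}
    (w : r a (a + d)) : ∀ b, a ≤ b → r b (b + d) := by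
  intro b hb
  have h := hr.2.2 a (a + d) (b - a) w
  have e1 : a + (b - a) = b := by omega
  have e2 : a + d + (b - a) = b + d := by omega
  rwa [e1, e2] at h

lemma step_down {r : ℕ → ℕ → Prop} (hr : IsStablePreorderN r) {a d : ℕ}
    (w : r (a + d) a) : ∀ b, a ≤ b → r (b + d) b := by
  intro b hb
  have h := hr.2.2 (a + d) a (b - a) w
  have e1 : a + (b - a) = b := by omega
  have e2 : a + d + (b - a) = b + d := by omega
  rwa [e1, e2] at h

lemma chain_up {r : ℕ → ℕ → Prop} (hr : IsStablePreorderN r) {a d : ℕ}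
    (w : r a (a + d)) : ∀ k b, a ≤ b → r b (b + k * d) := by
  intro k
  induction k with
  | zero => intro b _; simpa using hr.1 b
  | succ k ih =>
    intro b hb
    have h1 := ih b hb
    have h2 := step_up hr w (b + k * d) (by omega)
    have e : b + k * d + d = b + (k + 1) * d := by ring
    exact hr.2.1 _ _ _ h1 (e ▸ h2)

lemma chain_down {r : ℕ → ℕ → Prop} (hr : IsStablePreorderN r) {a d : ℕ}
    (w : r (a + d) a) : ∀ k b, a ≤ b → r (b + k * d) b := by
  intro k
  induction k with
  | zero => intro b _; simpa using hr.1 b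
  | succ k ih =>
    intro b hb
    have h1 := ih b hb
    have h2 := step_down hr w (b + k * d) (by omega)
    have e : b + k * d + d = b + (k + 1) * d := by ring
    exact hr.2.1 _ _ _ (e ▸ h2) h1

lemma sep (r : ℕ → ℕ → Prop) (hr : IsStablePreorderN r) (x₀ y₀ : ℕ) (h : ¬ r x₀ y₀) :
    ∃ r' : ℕ → ℕ → Prop, IsStablePreorderN r' ∧ FiniteIndexN r' ∧
      (∀ x y : ℕ, r x y → r' x y) ∧ ¬ r' x₀ y₀ := by
  by_cases hP : ∃ a d : ℕ, 0 < d ∧ r a (a + d)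
  · by_cases hQ : ∃ a d : ℕ, 0 < d ∧ r (a + d) a
    · -- both directions occur: r itself has finite index
      obtain ⟨a₁, d₁, hd₁, w₁⟩ := hP
      obtain ⟨a₂, d₂, hd₂, w₂⟩ := hQ
      refine ⟨r, hr, ?_, fun _ _ => id, h⟩
      apply finiteIndex_periodic hr (d := d₁ * d₂) (M := max a₁ a₂) (by positivity)
      intro a ha
      constructor
      · have h1 := chain_up hr w₁ d₂ a (le_trans (le_max_left _ _) ha)
        have e : d₂ * d₁ = d₁ * d₂ := by ring
        rwa [e] at h1
      · exact chain_down hr w₂ d₁ a (le_trans (le_max_right _ _) ha)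
    · -- only upward jumps
      obtain ⟨a₁, d, hd, w⟩ := hP
      have hmono : ∀ u v, r u v → u ≤ v := by
        intro u v huv
        by_contra hlt
        exact hQ ⟨v, u - v, by omega, by rwa [show v + (u - v) = u by omega]⟩
      set N := max x₀ y₀ + 1 with hN
      set s := fun x y => r x y ∨ (x = y + d ∧ N ≤ y) with hsdef
      have hsstable : ∀ x y z : ℕ, s x y → s (x + z) (y + z) := by
        rintro x y z (h1 | ⟨rfl, h2⟩)
        · exact Or.inl (hr.2.2 _ _ _ h1)
        · exact Or.inr ⟨by ring, by omega⟩
      have hr' := stable_rtClosure hsstable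
      refine ⟨Relation.ReflTransGen s, hr', ?_,
        fun x y hxy => Relation.ReflTransGen.single (Or.inl hxy), ?_⟩
      · apply finiteIndex_periodic hr' hd (M := max N a₁)
        intro a ha
        exact ⟨Relation.ReflTransGen.single
            (Or.inl (step_up hr w a (le_trans (le_max_right _ _) ha))),
          Relation.ReflTransGen.single (Or.inr ⟨rfl, le_trans (le_max_left _ _) ha⟩)⟩
      · intro hbad
        have key : ∀ c, Relation.ReflTransGen s x₀ c → c < N → r x₀ c := by
          intro c hc
          induction hc with
          | refl => intro _; exact hr.1 x₀
          | tail hab hbc ih =>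
            intro hcN
            rcases hbc with h1 | ⟨rfl, h2⟩
            · have hble := hmono _ _ h1
              exact hr.2.1 _ _ _ (ih (by omega)) h1
            · omega
        exact h (key y₀ hbad (by omega))
  · by_cases hQ : ∃ a d : ℕ, 0 < d ∧ r (a + d) a
    · -- only downward jumps
      obtain ⟨a₂, d, hd, w⟩ := hQ
      have hmono : ∀ u v, r u v → v ≤ u := by
        intro u v huv
        by_contra hlt
        exact hP ⟨u, v - u, by omega, by rwa [show u + (v - u) = v by omega]⟩
      set N := max x₀ y₀ + 1 with hN
      set s := fun x y => r x y ∨ (y = x + d ∧ N ≤ x) with hsdef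
      have hsstable : ∀ x y z : ℕ, s x y → s (x + z) (y + z) := by
        rintro x y z (h1 | ⟨rfl, h2⟩)
        · exact Or.inl (hr.2.2 _ _ _ h1)
        · exact Or.inr ⟨by ring, by omega⟩
      have hr' := stable_rtClosure hsstable
      refine ⟨Relation.ReflTransGen s, hr', ?_,
        fun x y hxy => Relation.ReflTransGen.single (Or.inl hxy), ?_⟩
      · apply finiteIndex_periodic hr' hd (M := max N a₂)
        intro a ha
        exact ⟨Relation.ReflTransGen.single (Or.inr ⟨rfl, le_trans (le_max_left _ _) ha⟩),
          Relation.ReflTransGen.single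
            (Or.inl (step_down hr w a (le_trans (le_max_right _ _) ha)))⟩
      · intro hbad
        have key : ∀ c, Relation.ReflTransGen s x₀ c → r x₀ c ∧ c < N := by
          intro c hc
          induction hc with
          | refl => exact ⟨hr.1 x₀, by omega⟩
          | tail hab hbc ih =>
            rcases hbc with h1 | ⟨rfl, h2⟩
            · have hble := hmono _ _ h1
              exact ⟨hr.2.1 _ _ _ ih.1 h1, by omega⟩
            · exact absurd ih.2 (by omega)
        exact h (key y₀ hbad).1
    · -- r is equality
      have heqr : ∀ u v, r u v → u = v := by
        intro u v huv
        by_contra hne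
        rcases Nat.lt_or_ge u v with hlt | hge
        · exact hP ⟨u, v - u, by omega, by rwa [show u + (v - u) = v by omega]⟩
        · exact hQ ⟨v, u - v, by omega, by rwa [show v + (u - v) = u by omega]⟩
      set N := max x₀ y₀ + 1 with hN
      refine ⟨fun x y => x = y ∨ (N ≤ x ∧ N ≤ y), ⟨fun x => Or.inl rfl, ?_, ?_⟩, ?_, ?_, ?_⟩
      · rintro x y z (rfl | ⟨h1, h2⟩) (rfl | ⟨h3, h4⟩)
        · exact Or.inl rfl
        · exact Or.inr ⟨h3, h4⟩
        · exact Or.inr ⟨h1, h2⟩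
        · exact Or.inr ⟨h1, h4⟩
      · rintro x y z (rfl | ⟨h1, h2⟩)
        · exact Or.inl rfl
        · exact Or.inr ⟨by omega, by omega⟩
      · apply finiteIndex_periodic (r := fun x y => x = y ∨ (N ≤ x ∧ N ≤ y))
          ⟨fun x => Or.inl rfl, ?_, ?_⟩ (d := 1) (M := N) (by omega)
        · intro a ha
          exact ⟨Or.inr ⟨by omega, by omega⟩, Or.inr ⟨by omega, by omega⟩⟩
        · rintro x y z (rfl | ⟨h1, h2⟩) (rfl | ⟨h3, h4⟩)
          · exact Or.inl rfl
          · exact Or.inr ⟨h3, h4⟩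
          · exact Or.inr ⟨h1, h2⟩
          · exact Or.inr ⟨h1, h4⟩
        · rintro x y z (rfl | ⟨h1, h2⟩)
          · exact Or.inl rfl
          · exact Or.inr ⟨by omega, by omega⟩
      · exact fun x y hxy => Or.inl (heqr _ _ hxy)
      · rintro (h1 | ⟨h2, h3⟩)
        · exact h (h1 ▸ hr.1 x₀)
        · omega

theorem stmt_18 :
    -- separation form of sp-residual finiteness of ⟨ℕ,+⟩
    (∀ r : ℕ → ℕ → Prop, IsStablePreorderN r →
      ∀ x₀ y₀ : ℕ, ¬ r x₀ y₀ →
        ∃ r' : ℕ → ℕ → Prop, IsStablePreorderN r' ∧ FiniteIndexN r' ∧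
          (∀ x y : ℕ, r x y → r' x y) ∧ ¬ r' x₀ y₀) ∧
    -- equivalently: every stable preorder is an intersection of finite index ones
    (∀ r : ℕ → ℕ → Prop, IsStablePreorderN r →
      ∃ (I : Type) (fam : I → ℕ → ℕ → Prop),
        (∀ i, IsStablePreorderN (fam i) ∧ FiniteIndexN (fam i)) ∧
        (∀ x y : ℕ, r x y ↔ ∀ i, fam i x y)) := by
  constructor
  · exact sep
  · intro r hr
    refine ⟨{p : ℕ × ℕ // ¬ r p.1 p.2},
      fun i => Classical.choose (sep r hr i.1.1 i.1.2 i.2), fun i => ?_, fun x y => ?_⟩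
    · obtain ⟨h1, h2, _, _⟩ := Classical.choose_spec (sep r hr i.1.1 i.1.2 i.2)
      exact ⟨h1, h2⟩
    · constructor
      · intro hxy i
        exact (Classical.choose_spec (sep r hr i.1.1 i.1.2 i.2)).2.2.1 x y hxy
      · intro hall
        by_contra hxy
        exact (Classical.choose_spec (sep r hr x y hxy)).2.2.2 (hall ⟨(x, y), hxy⟩)
end

section
/- Let ⊑ be a stable preorder on ⟨ℤ,+⟩ (a reflexive transitive relation with x ⊑ y implying (x+z) ⊑ (y+z) for all z ∈ ℤ) that contains the usual order (x ≤ y implies x ⊑ y) and strictly contains it (there exist a, b ∈ ℤ with b < a and a ⊑ b). Then ⊑ is the total relation: u ⊑ v for all u, v ∈ ℤ. Consequently the usual order ≤ on ℤ is not an intersection of finite index stable preorders, so ⟨ℤ,+⟩ is not sp-residually finite. -/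
/-- A stable preorder on ⟨ℤ,+⟩: a reflexive transitive relation compatible with addition. -/
def IsStablePreorderZ (r : ℤ → ℤ → Prop) : Prop :=
  (∀ x, r x x) ∧ (∀ x y z : ℤ, r x y → r y z → r x z) ∧
    (∀ x y z : ℤ, r x y → r (x + z) (y + z))

/-- A relation has finite index if the associated equivalence
`x ≈ y ⇔ (r x y ∧ r y x)` has finitely many classes. -/
def FiniteIndexZ (r : ℤ → ℤ → Prop) : Prop :=
  Set.Finite {s : Set ℤ | ∃ x : ℤ, s = {y | r x y ∧ r y x}}


/-!
If `a ⊑ b` with `b < a`, translating by multiples of `b - a` gives `u ⊑ u + n (b - a)` for every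
`n`, and for `n` large this lies below any given `v`, so `u ⊑ v` by `≤ ⊆ ⊑`. A finite index stable
preorder containing `≤` must identify two distinct integers, so it is total; an intersection of such
preorders is therefore total as well and cannot be `≤`.
-/

namespace IsStablePreorderZ

variable {r : ℤ → ℤ → Prop}

theorem rel_add_mul_sub (hsp : IsStablePreorderZ r) {x y : ℤ} (hxy : r x y) :
    ∀ n : ℕ, r x (x + n * (y - x))
  | 0 => by simpa using hsp.1 x
  | n + 1 => by
    have hstep : r (x + n * (y - x)) (x + (n + 1 : ℕ) * (y - x)) := by
      convert hsp.2.2 x y (n * (y - x)) hxy using 1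
      push_cast
      ring
    exact hsp.2.1 _ _ _ (rel_add_mul_sub hsp hxy n) hstep

theorem rel_of_le_of_rel_of_lt (hsp : IsStablePreorderZ r) (hle : ∀ x y : ℤ, x ≤ y → r x y)
    {a b : ℤ} (hba : b < a) (hab : r a b) (u v : ℤ) : r u v := by
  set n := (u - v).toNat
  have hdown : r u (u + n * (b - a)) := by
    convert hsp.2.2 a _ (u - a) (hsp.rel_add_mul_sub hab n) using 1 <;> ring
  have hbelow : u + n * (b - a) ≤ v := by
    have hn : u - v ≤ n := Int.self_le_toNat _
    nlinarith
  exact hsp.2.1 _ _ _ hdown (hle _ _ hbelow)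

end IsStablePreorderZ

theorem FiniteIndexZ.exists_lt_rel {r : ℤ → ℤ → Prop} (hrefl : ∀ x, r x x)
    (hfin : FiniteIndexZ r) : ∃ a b : ℤ, b < a ∧ r a b := by
  obtain ⟨b, a, hba, hclass⟩ := hfin.exists_lt_map_eq_of_forall_mem
    (f := fun x : ℤ => {y | r x y ∧ r y x}) fun x => Set.mem_ofPred.2 ⟨x, rfl⟩
  have hab : r b a ∧ r a b := (Set.ext_iff.1 hclass a).2 ⟨hrefl a, hrefl a⟩
  exact ⟨a, b, hba, hab.2⟩

theorem stmt_19 (r : ℤ → ℤ → Prop) (hsp : IsStablePreorderZ r)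
    (hle : ∀ x y : ℤ, x ≤ y → r x y)
    (hstrict : ∃ a b : ℤ, b < a ∧ r a b) :
    -- r is the total relation
    (∀ u v : ℤ, r u v) ∧
    -- consequently ≤ is not an intersection of finite index stable preorders,
    -- so ⟨ℤ,+⟩ is not sp-residually finite
    ¬ ∃ (I : Type) (fam : I → ℤ → ℤ → Prop),
        (∀ i, IsStablePreorderZ (fam i) ∧ FiniteIndexZ (fam i)) ∧
        (∀ x y : ℤ, x ≤ y ↔ ∀ i, fam i x y) := by
  obtain ⟨a, b, hba, hab⟩ := hstrict
  refine ⟨hsp.rel_of_le_of_rel_of_lt hle hba hab, ?_⟩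
  rintro ⟨I, fam, hfam, hiff⟩
  have htotal : ∀ i, fam i 1 0 := fun i => by
    obtain ⟨hspi, hfin⟩ := hfam i
    obtain ⟨a, b, hba, hab⟩ := hfin.exists_lt_rel hspi.1
    exact hspi.rel_of_le_of_rel_of_lt (fun x y h => (hiff x y).1 h i) hba hab 1 0
  exact absurd ((hiff 1 0).2 htotal) (by decide)
end
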